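/- Let Ω ⊂ ℝⁿ be open, bounded, with C^{1,1} boundary (hence satisfying a uniform interior sphere condition), and s ∈ (0,1). Then there exists c > 0 such that for all z ∈ ℝⁿ \ closure(Ω): (1/c)·min(d(z)^{−2s}, d(z)^{−(n+2s)}) ≤ ∫_Ω |z−w|^{−(n+2s)} dw ≤ c·min(d(z)^{−2s}, d(z)^{−(n+2s)}), where d(z) = dist(z, ∂Ω). -/

import Mathlib

/-!
Write `d = d(z)` and `α = n + 2s`. Upper bound: `Ω` lies outside `B(z, d)`, and by scaling the
integral of `|z - w|^{-α}` over the complement of that ball is a constant times `d^{n-α} = d^{-2s}`;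
trivially the integral is also at most `|Ω| d^{-α}`.
Lower bound: at a boundary point `p` nearest to `z`, the interior ball of radius `r` contains a ball
of radius `t = min d r` touching `p`. On it `|z - w| ≤ 3d`, so the integral is at least a multiple
of `t^n d^{-α} ≥ (min r 1)^n min(d^{-2s}, d^{-α})`. The exterior sphere condition is what puts the
interior ball, a priori only in `closure Ω`, inside `Ω`.
-/

open MeasureTheory Metric Set

/-- A bounded open set with `C^{1,1}` boundary: we encode the analytically relevant
consequence, namely the uniform interior and exterior sphere conditions at every
boundary point (which hold if and only if the boundary is `C^{1,1}` for a bounded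
open set). -/
def HasC11Boundary {n : ℕ} (Ω : Set (EuclideanSpace ℝ (Fin n))) : Prop :=
  ∃ r > 0, ∀ p ∈ frontier Ω,
    (∃ x ∈ Ω, Metric.closedBall x r ⊆ closure Ω ∧ dist p x = r) ∧
    (∃ y ∈ (closure Ω)ᶜ, Metric.closedBall y r ⊆ Ωᶜ ∧ dist p y = r)

open Module

lemma rpow_neg_le_mul_one_add_rpow_neg {α d x : ℝ} (hα : 0 ≤ α) (hd : 0 < d) (hx : d ≤ x) :
    x ^ (-α) ≤ (1 + d⁻¹) ^ α * (1 + x) ^ (-α) := by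
  have hx0 : 0 < x := hd.trans_le hx
  have hle : 1 + x ≤ (1 + d⁻¹) * x := by
    have : 1 ≤ d⁻¹ * x := by rwa [inv_mul_eq_div, one_le_div hd]
    linarith
  calc x ^ (-α) = (1 + d⁻¹) ^ α * ((1 + d⁻¹) * x) ^ (-α) := by
        rw [Real.mul_rpow (by positivity) hx0.le, ← mul_assoc, ← Real.rpow_add (by positivity),
          add_neg_cancel, Real.rpow_zero, one_mul]
    _ ≤ (1 + d⁻¹) ^ α * (1 + x) ^ (-α) :=
        mul_le_mul_of_nonneg_left (Real.rpow_le_rpow_of_nonpos (by positivity) hle (by linarith))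
          (by positivity)

lemma min_mul_le_max_mul_min {a b x y : ℝ} (hx : 0 ≤ x) (hy : 0 ≤ y) :
    min (a * x) (b * y) ≤ max a b * min x y := by
  rcases le_total x y with h | h
  · rw [min_eq_left h]
    exact (min_le_left _ _).trans (mul_le_mul_of_nonneg_right (le_max_left a b) hx)
  · rw [min_eq_right h]
    exact (min_le_right _ _).trans (mul_le_mul_of_nonneg_right (le_max_right a b) hy)

lemma min_pow_mul_min_rpow_le {d r : ℝ} (hd : 0 < d) (hr : 0 < r) (k : ℕ) (α : ℝ) :
    min r 1 ^ k * min (d ^ ((k : ℝ) - α)) (d ^ (-α)) ≤ min d r ^ k * d ^ (-α) := by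
  rcases le_total d r with h | h
  · rw [min_eq_left h, ← Real.rpow_natCast d k, ← Real.rpow_add hd, ← sub_eq_add_neg]
    exact (mul_le_of_le_one_left (by positivity)
      (pow_le_one₀ (by positivity) (min_le_right _ _))).trans (min_le_left _ _)
  · rw [min_eq_right h]
    exact mul_le_mul (pow_le_pow_left₀ (by positivity) (min_le_left r 1) k) (min_le_right _ _)
      (by positivity) (by positivity)

lemma subset_compl_ball_of_le_dist {X : Type*} [PseudoMetricSpace X] {s : Set X} {z : X} {d : ℝ}
    (h : ∀ w ∈ s, d ≤ dist z w) : s ⊆ (ball z d)ᶜ := fun w hw hwz ↦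
  (h w hw).not_gt (by rwa [mem_ball, dist_comm] at hwz)

section Geometry

variable {E : Type*} [NormedAddCommGroup E] [NormedSpace ℝ E]

lemma exists_ball_subset_ball_dist_eq {p x : E} {r t : ℝ} (hr : 0 < r) (hpx : dist p x = r)
    (ht : 0 ≤ t) (htr : t ≤ r) : ∃ q, ball q t ⊆ ball x r ∧ dist p q = t := by
  refine ⟨AffineMap.lineMap p x (t / r), ball_subset_ball' ?_, ?_⟩
  · rw [dist_lineMap_right, hpx, Real.norm_of_nonneg (by rw [sub_nonneg, div_le_one hr]; exact htr)]
    field_simp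
    linarith
  · rw [dist_comm, dist_lineMap_left, hpx, Real.norm_of_nonneg (by positivity)]
    field_simp

lemma IsOpen.subset_of_subset_closure_of_exterior_ball {Ω U : Set E} (hΩ : IsOpen Ω)
    (hU : IsOpen U) (hUΩ : U ⊆ closure Ω) {r : ℝ} (hr : 0 < r)
    (hext : ∀ p ∈ frontier Ω, ∃ y, closedBall y r ⊆ Ωᶜ ∧ dist p y = r) : U ⊆ Ω := by
  intro u hu
  by_contra huΩ
  obtain ⟨y, hy, huy⟩ := hext u (by rw [hΩ.frontier_eq]; exact ⟨hUΩ hu, huΩ⟩)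
  have hball : ball y r ⊆ (closure Ω)ᶜ := by
    rw [← interior_compl]
    exact interior_maximal (ball_subset_closedBall.trans hy) isOpen_ball
  have hu_cl : u ∈ closure (ball y r) := by rw [closure_ball y hr.ne']; exact huy.le
  obtain ⟨v, hvU, hvy⟩ := _root_.mem_closure_iff.mp hu_cl U hU hu
  exact hball hvy (hUΩ hvU)

section NearestBoundaryPoint

variable [FiniteDimensional ℝ E] {s : Set E} {z : E}

lemma infDist_frontier_eq_infDist (hz : z ∉ closure s) (hs : s.Nonempty) :
    infDist z (frontier s) = infDist z s := by
  obtain ⟨y, hy, hzy⟩ :=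
    exists_mem_frontier_infDist_compl_eq_dist (s := (closure s)ᶜ) hz (compl_ne_univ.mpr hs.closure)
  rw [compl_compl, infDist_closure] at hzy
  rw [frontier_compl] at hy
  have hy' : y ∈ frontier s := frontier_closure_subset hy
  refine le_antisymm ((infDist_le_dist_of_mem hy').trans hzy.ge) ?_
  rw [← infDist_closure (s := s)]
  exact infDist_le_infDist_of_subset frontier_subset_closure ⟨y, hy'⟩

lemma infDist_frontier_pos (hz : z ∉ closure s) (hs : s.Nonempty) :
    0 < infDist z (frontier s) := by
  rw [infDist_frontier_eq_infDist hz hs, ← infDist_closure]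
  exact (isClosed_closure.notMem_iff_infDist_pos hs.closure).mp hz

lemma infDist_frontier_le_dist (hz : z ∉ closure s) (hs : s.Nonempty) {w : E} (hw : w ∈ s) :
    infDist z (frontier s) ≤ dist z w :=
  infDist_frontier_eq_infDist hz hs ▸ infDist_le_dist_of_mem hw

lemma exists_mem_frontier_dist_eq_infDist (hb : Bornology.IsBounded s) (hz : z ∉ closure s)
    (hs : s.Nonempty) : ∃ p ∈ frontier s, dist z p = infDist z (frontier s) := by
  have hfr : (frontier s).Nonempty :=
    nonempty_frontier_iff.mpr ⟨hs, by rintro rfl; exact hz (subset_closure (mem_univ z))⟩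
  obtain ⟨p, hp, hzp⟩ := (isCompact_of_isClosed_isBounded isClosed_frontier
    (hb.closure.subset frontier_subset_closure)).exists_infDist_eq_dist hfr z
  exact ⟨p, hp, hzp.symm⟩

end NearestBoundaryPoint

end Geometry

section Kernel

variable {E : Type*} [NormedAddCommGroup E] [NormedSpace ℝ E] [FiniteDimensional ℝ E]
  [MeasurableSpace E] [BorelSpace E] (μ : Measure E) [μ.IsAddHaarMeasure]

lemma integrableOn_norm_sub_rpow_neg_compl_ball {α : ℝ} (hα : finrank ℝ E < α) (z : E) {d : ℝ}
    (hd : 0 < d) : IntegrableOn (fun w ↦ ‖z - w‖ ^ (-α)) (ball z d)ᶜ μ := by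
  have hdom : Integrable (fun w ↦ (1 + d⁻¹) ^ α * (1 + ‖w - z‖) ^ (-α)) μ :=
    ((integrable_one_add_norm hα).comp_sub_right z).const_mul _
  refine hdom.integrableOn.mono' (Measurable.aestronglyMeasurable (by fun_prop)) ?_
  filter_upwards [ae_restrict_mem measurableSet_ball.compl] with w hw
  rw [Real.norm_of_nonneg (by positivity), norm_sub_rev]
  exact rpow_neg_le_mul_one_add_rpow_neg ((Nat.cast_nonneg _).trans hα.le) hd
    (by simpa [dist_eq_norm] using hw)

lemma integrableOn_norm_sub_rpow_neg_of_le_dist {α : ℝ} (hα : finrank ℝ E < α) {Ω : Set E}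
    {z : E} {d : ℝ} (hd : 0 < d) (hdist : ∀ w ∈ Ω, d ≤ dist z w) :
    IntegrableOn (fun w ↦ ‖z - w‖ ^ (-α)) Ω μ :=
  (integrableOn_norm_sub_rpow_neg_compl_ball μ hα z hd).mono_set
    (subset_compl_ball_of_le_dist hdist)

lemma setIntegral_compl_ball_comp_norm_sub (f : ℝ → ℝ) (z : E) (d : ℝ) :
    ∫ w in (ball z d)ᶜ, f ‖z - w‖ ∂μ = ∫ x in (ball 0 d)ᶜ, f ‖x‖ ∂μ := by
  rw [← integral_indicator measurableSet_ball.compl, ← integral_indicator measurableSet_ball.compl,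
    ← integral_sub_left_eq_self _ μ z]
  congr 1 with w
  simp [indicator, dist_eq_norm]

open Pointwise in
lemma setIntegral_compl_ball_norm_rpow_neg (α : ℝ) {d : ℝ} (hd : 0 < d) :
    ∫ x in (ball (0 : E) d)ᶜ, ‖x‖ ^ (-α) ∂μ =
      d ^ ((finrank ℝ E : ℝ) - α) * ∫ x in (ball (0 : E) 1)ᶜ, ‖x‖ ^ (-α) ∂μ := by
  have hscale : d • (ball (0 : E) 1)ᶜ = (ball 0 d)ᶜ := by
    ext x
    rw [mem_smul_set_iff_inv_smul_mem₀ hd.ne', ← smul_unitBall_of_pos hd,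
      mem_compl_iff, mem_compl_iff, mem_smul_set_iff_inv_smul_mem₀ hd.ne']
  have h := Measure.setIntegral_comp_smul_of_pos μ (fun x : E ↦ ‖x‖ ^ (-α)) (ball 0 1)ᶜ hd
  simp only [hscale, norm_smul, Real.norm_of_nonneg hd.le, Real.mul_rpow hd.le (norm_nonneg _),
    integral_const_mul, smul_eq_mul] at h
  rw [Real.rpow_neg hd.le] at h
  rw [Real.rpow_sub hd, Real.rpow_natCast]
  field_simp at h ⊢
  linarith

theorem setIntegral_norm_sub_rpow_neg_le {α : ℝ} (hα : finrank ℝ E < α) {Ω : Set E}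
    (hΩ : μ Ω ≠ ⊤) {z : E} {d : ℝ} (hd : 0 < d) (hdist : ∀ w ∈ Ω, d ≤ dist z w) :
    ∫ w in Ω, ‖z - w‖ ^ (-α) ∂μ ≤
      max (∫ x in (ball (0 : E) 1)ᶜ, ‖x‖ ^ (-α) ∂μ) (μ.real Ω) *
        min (d ^ ((finrank ℝ E : ℝ) - α)) (d ^ (-α)) := by
  have hfar : ∫ w in Ω, ‖z - w‖ ^ (-α) ∂μ ≤
      (∫ x in (ball (0 : E) 1)ᶜ, ‖x‖ ^ (-α) ∂μ) * d ^ ((finrank ℝ E : ℝ) - α) :=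
    calc ∫ w in Ω, ‖z - w‖ ^ (-α) ∂μ ≤ ∫ w in (ball z d)ᶜ, ‖z - w‖ ^ (-α) ∂μ :=
          setIntegral_mono_set (integrableOn_norm_sub_rpow_neg_compl_ball μ hα z hd)
            (ae_of_all _ fun w ↦ by positivity) (subset_compl_ball_of_le_dist hdist).eventuallyLE
      _ = _ := by
          rw [setIntegral_compl_ball_comp_norm_sub μ (· ^ (-α)),
            setIntegral_compl_ball_norm_rpow_neg μ α hd, mul_comm]
  have hnear : ∫ w in Ω, ‖z - w‖ ^ (-α) ∂μ ≤ μ.real Ω * d ^ (-α) := by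
    rw [mul_comm]
    refine (Real.le_norm_self _).trans (norm_setIntegral_le_of_norm_le_const hΩ.lt_top fun w hw ↦ ?_)
    rw [Real.norm_of_nonneg (by positivity)]
    exact Real.rpow_le_rpow_of_nonpos hd (by rw [← dist_eq_norm]; exact hdist w hw)
      (by linarith [(Nat.cast_nonneg (finrank ℝ E) : (0 : ℝ) ≤ _)])
  exact (le_min hfar hnear).trans (min_mul_le_max_mul_min (by positivity) (by positivity))

theorem le_setIntegral_norm_sub_rpow_neg {α : ℝ} (hα : 0 ≤ α) {Ω : Set E} {z p x : E} {r d : ℝ}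
    (hr : 0 < r) (hd : 0 < d) (hxΩ : ball x r ⊆ Ω) (hpx : dist p x = r) (hzp : dist z p = d)
    (hzΩ : z ∉ Ω) (hint : IntegrableOn (fun w ↦ ‖z - w‖ ^ (-α)) Ω μ) :
    3 ^ (-α) * μ.real (ball 0 1) * min r 1 ^ finrank ℝ E *
        min (d ^ ((finrank ℝ E : ℝ) - α)) (d ^ (-α)) ≤ ∫ w in Ω, ‖z - w‖ ^ (-α) ∂μ := by
  set t := min d r
  have ht : 0 < t := lt_min hd hr
  obtain ⟨q, hqx, hpq⟩ := exists_ball_subset_ball_dist_eq hr hpx ht.le (min_le_right d r)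
  have hqΩ : ball q t ⊆ Ω := hqx.trans hxΩ
  have hnear : ∀ w ∈ ball q t, (3 * d) ^ (-α) ≤ ‖z - w‖ ^ (-α) := by
    intro w hw
    have hzw : dist z w ≤ 3 * d :=
      calc dist z w ≤ dist z p + dist p q + dist q w := dist_triangle4 z p q w
        _ ≤ d + t + t := by linarith [mem_ball'.mp hw]
        _ ≤ 3 * d := by linarith [min_le_left d r]
    refine Real.rpow_le_rpow_of_nonpos ?_ (by rwa [← dist_eq_norm]) (by linarith)
    exact norm_sub_pos_iff.mpr fun h ↦ hzΩ (h ▸ hqΩ hw)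
  have hvol : μ.real (ball q t) = t ^ finrank ℝ E * μ.real (ball 0 1) := by
    rw [measureReal_def, measureReal_def, Measure.addHaar_ball_of_pos μ q ht, ENNReal.toReal_mul,
      ENNReal.toReal_ofReal (by positivity)]
  calc 3 ^ (-α) * μ.real (ball 0 1) * min r 1 ^ finrank ℝ E *
        min (d ^ ((finrank ℝ E : ℝ) - α)) (d ^ (-α))
      ≤ 3 ^ (-α) * μ.real (ball 0 1) * (t ^ finrank ℝ E * d ^ (-α)) := by
        rw [mul_assoc]
        exact mul_le_mul_of_nonneg_left (min_pow_mul_min_rpow_le hd hr _ α) (by positivity)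
    _ = μ.real (ball q t) • (3 * d) ^ (-α) := by
        rw [hvol, smul_eq_mul, Real.mul_rpow (by norm_num) hd.le]
        ring
    _ ≤ ∫ w in ball q t, ‖z - w‖ ^ (-α) ∂μ :=
        setIntegral_ge_of_const_le measurableSet_ball measure_ball_lt_top.ne hnear
          (hint.mono_set hqΩ)
    _ ≤ ∫ w in Ω, ‖z - w‖ ^ (-α) ∂μ :=
        setIntegral_mono_set hint (ae_of_all _ fun w ↦ by positivity) hqΩ.eventuallyLE

end Kernel

theorem stmt5 {n : ℕ} (Ω : Set (EuclideanSpace ℝ (Fin n)))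
    (hΩo : IsOpen Ω) (hΩb : Bornology.IsBounded Ω) (hΩne : Ω.Nonempty)
    (hΩc : HasC11Boundary Ω)
    (s : ℝ) (hs : s ∈ Set.Ioo (0:ℝ) 1) :
    ∃ c > 0, ∀ z ∉ closure Ω,
      (1/c) * min (Metric.infDist z (frontier Ω) ^ (-(2*s)))
              (Metric.infDist z (frontier Ω) ^ (-((n : ℝ) + 2*s)))
        ≤ (∫ w in Ω, ‖z - w‖ ^ (-((n : ℝ) + 2*s))) ∧
      (∫ w in Ω, ‖z - w‖ ^ (-((n : ℝ) + 2*s)))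
        ≤ c * min (Metric.infDist z (frontier Ω) ^ (-(2*s)))
              (Metric.infDist z (frontier Ω) ^ (-((n : ℝ) + 2*s))) := by
  obtain ⟨hs0, -⟩ := hs
  obtain ⟨r, hr, hsph⟩ := hΩc
  set α : ℝ := (n : ℝ) + 2 * s
  have hdim : finrank ℝ (EuclideanSpace ℝ (Fin n)) = n := finrank_euclideanSpace_fin
  have hα : (finrank ℝ (EuclideanSpace ℝ (Fin n)) : ℝ) < α := by rw [hdim]; linarith
  have hexp : (n : ℝ) - α = -(2 * s) := by ring
  set c₁ := 3 ^ (-α) * volume.real (ball (0 : EuclideanSpace ℝ (Fin n)) 1) * min r 1 ^ n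
  have hc₁ : 0 < c₁ := by
    have : 0 < volume.real (ball (0 : EuclideanSpace ℝ (Fin n)) 1) :=
      ENNReal.toReal_pos (measure_ball_pos _ _ one_pos).ne' measure_ball_lt_top.ne
    positivity
  set K := max (∫ x in (ball (0 : EuclideanSpace ℝ (Fin n)) 1)ᶜ, ‖x‖ ^ (-α)) (volume.real Ω)
  have hc : 0 < max K (1 / c₁) := lt_max_of_lt_right (one_div_pos.mpr hc₁)
  refine ⟨max K (1 / c₁), hc, fun z hz ↦ ?_⟩
  set d := infDist z (frontier Ω)
  have hd : 0 < d := infDist_frontier_pos hz hΩne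
  have hdist : ∀ w ∈ Ω, d ≤ dist z w := fun _ ↦ infDist_frontier_le_dist hz hΩne
  obtain ⟨p, hp, hzp⟩ := exists_mem_frontier_dist_eq_infDist hΩb hz hΩne
  obtain ⟨⟨x, -, hxΩ, hpx⟩, -⟩ := hsph p hp
  have hball : ball x r ⊆ Ω := hΩo.subset_of_subset_closure_of_exterior_ball isOpen_ball
    (ball_subset_closedBall.trans hxΩ) hr fun p hp ↦ (hsph p hp).2.imp fun _ hy ↦ hy.2
  have hlow := le_setIntegral_norm_sub_rpow_neg volume (by positivity) hr hd hball hpx hzp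
    (fun hzΩ ↦ hz (subset_closure hzΩ)) (integrableOn_norm_sub_rpow_neg_of_le_dist volume hα hd hdist)
  have hup := setIntegral_norm_sub_rpow_neg_le volume hα hΩb.measure_lt_top.ne hd hdist
  rw [hdim, hexp] at hlow hup
  have hmin : 0 ≤ min (d ^ (-(2 * s))) (d ^ (-α)) := by positivity
  have hinv : 1 / max K (1 / c₁) ≤ c₁ := (one_div_le hc hc₁).mpr (le_max_right _ _)
  exact ⟨(mul_le_mul_of_nonneg_right hinv hmin).trans hlow,
    hup.trans (mul_le_mul_of_nonneg_right (le_max_left _ _) hmin)⟩
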